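/- arXiv:2305.16722 — 5 statements merged into one kernel-verified Lean document; each statement's English description precedes it below -/
import Mathlib

section
/- Let p > 1 and suppose c, s : ℝ → ℝ are differentiable functions satisfying c'(θ) = -|s(θ)|^{p-1} · sgn(s(θ)), s'(θ) = |c(θ)|^{p-1} · sgn(c(θ)) for all θ, with initial conditions c(0) = 1 and s(0) = 0. Then |c(θ)|^p + |s(θ)|^p = 1 for all θ ∈ ℝ. -/
lemma abs_rpow_hasDerivAt (p : ℝ) (hp : 1 < p) (x : ℝ) :
    HasDerivAt (fun y : ℝ => |y| ^ p) (p * |x| ^ (p - 1) * Real.sign x) x := by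
  have hp1 : p - 1 ≠ 0 := ne_of_gt (by linarith)
  have hp0 : p ≠ 0 := ne_of_gt (by linarith)
  rcases lt_trichotomy x 0 with hx | hx | hx
  · have h : HasDerivAt (fun y : ℝ => (-y) ^ p) (p * (-x) ^ (p - 1) * (-1)) x := by
      have := (Real.hasDerivAt_rpow_const (x := -x) (p := p) (Or.inl (by linarith))).comp x
        (hasDerivAt_neg x)
      simpa [Function.comp_def] using this
    have heq : (fun y : ℝ => |y| ^ p) =ᶠ[nhds x] fun y => (-y) ^ p := by
      filter_upwards [eventually_lt_nhds hx] with y hy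
      rw [abs_of_neg hy]
    have hval : p * |x| ^ (p - 1) * Real.sign x = p * (-x) ^ (p - 1) * (-1) := by
      rw [Real.sign_of_neg hx, abs_of_neg hx]
    rw [hval]
    exact h.congr_of_eventuallyEq heq
  · subst hx
    rw [Real.sign_zero, mul_zero]
    rw [hasDerivAt_iff_isLittleO]
    simp only [abs_zero, sub_zero, smul_zero, Real.zero_rpow hp0]
    have h1 : (fun y : ℝ => |y| ^ (p - 1)) =o[nhds 0] (fun _ => (1:ℝ)) := by
      rw [Asymptotics.isLittleO_one_iff]
      have hcont : ContinuousAt (fun y : ℝ => |y| ^ (p - 1)) 0 :=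
        (Real.continuousAt_rpow_const _ _ (Or.inr (by linarith))).comp
          continuous_abs.continuousAt
      simpa [Real.zero_rpow hp1] using hcont.tendsto
    have h2 : (fun y : ℝ => |y|) =O[nhds 0] (fun y : ℝ => y) := by
      apply Asymptotics.isBigO_of_le
      intro y; simp
    have := h1.mul_isBigO h2
    simp only [one_mul] at this
    refine this.congr' ?_ (by rfl)
    filter_upwards with y
    rcases eq_or_ne y 0 with rfl | hy
    · simp [Real.zero_rpow hp1, Real.zero_rpow hp0]
    · nth_rewrite 2 [← Real.rpow_one |y|]
      rw [← Real.rpow_add (abs_pos.mpr hy)]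
      norm_num
  · have h : HasDerivAt (fun y : ℝ => y ^ p) (p * x ^ (p - 1)) x :=
      Real.hasDerivAt_rpow_const (Or.inl (by linarith))
    have heq : (fun y : ℝ => |y| ^ p) =ᶠ[nhds x] fun y => y ^ p := by
      filter_upwards [eventually_gt_nhds hx] with y hy
      rw [abs_of_pos hy]
    have hval : p * |x| ^ (p - 1) * Real.sign x = p * x ^ (p - 1) := by
      rw [Real.sign_of_pos hx, abs_of_pos hx, mul_one]
    rw [hval]
    exact h.congr_of_eventuallyEq heq

theorem p_trig_pythagorean (p : ℝ) (hp : 1 < p) (c s : ℝ → ℝ)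
    (hc : ∀ θ : ℝ, HasDerivAt c (-(|s θ| ^ (p - 1) * Real.sign (s θ))) θ)
    (hs : ∀ θ : ℝ, HasDerivAt s (|c θ| ^ (p - 1) * Real.sign (c θ)) θ)
    (hc0 : c 0 = 1) (hs0 : s 0 = 0) :
    ∀ θ : ℝ, |c θ| ^ p + |s θ| ^ p = 1 := by
  set F : ℝ → ℝ := fun θ => |c θ| ^ p + |s θ| ^ p with hF
  have hF' : ∀ θ, HasDerivAt F 0 θ := by
    intro θ
    have h1 : HasDerivAt (fun θ => |c θ| ^ p)
        ((p * |c θ| ^ (p - 1) * Real.sign (c θ)) * (-(|s θ| ^ (p - 1) * Real.sign (s θ)))) θ :=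
      (abs_rpow_hasDerivAt p hp (c θ)).comp θ (hc θ)
    have h2 : HasDerivAt (fun θ => |s θ| ^ p)
        ((p * |s θ| ^ (p - 1) * Real.sign (s θ)) * (|c θ| ^ (p - 1) * Real.sign (c θ))) θ :=
      (abs_rpow_hasDerivAt p hp (s θ)).comp θ (hs θ)
    have := h1.add h2
    refine this.congr_deriv ?_
    ring
  intro θ
  have hconst : F θ = F 0 :=
    is_const_of_deriv_eq_zero (fun x => (hF' x).differentiableAt)
      (fun x => (hF' x).deriv) θ 0
  have h0 : F 0 = 1 := by
    simp [hF, hc0, hs0, Real.one_rpow, Real.zero_rpow (ne_of_gt (by linarith : (0:ℝ) < p))]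
  calc |c θ| ^ p + |s θ| ^ p = F θ := rfl
    _ = 1 := by rw [hconst, h0]
end

section
/- Let q > 1 and define P(s) = |1+s|^{2q} - q²|1+s|^q(1+s) + 2(q²-1)|1+s|^q - q²|1+s|^{q-2}(1+s) + 1 for s ∈ ℝ (with the convention |1+s|^{q-2}(1+s) = 0 when s = -1). Then P(s) ≥ 0 for all s ∈ ℝ, and P(s) = 0 if and only if s = 0. -/
open Real Set

noncomputable def P (q s : ℝ) : ℝ :=
  |1 + s| ^ (2 * q) - q ^ 2 * |1 + s| ^ q * (1 + s) + 2 * (q ^ 2 - 1) * |1 + s| ^ q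
    - q ^ 2 * |1 + s| ^ (q - 2) * (1 + s) + 1

lemma sinh_mul_gt (q : ℝ) (hq : 1 < q) {u : ℝ} (hu : 0 < u) :
    q * Real.sinh u < Real.sinh (q * u) := by
  set g : ℝ → ℝ := fun x => Real.sinh (q * x) - q * Real.sinh x with hg
  have hd : ∀ x : ℝ, HasDerivAt g (Real.cosh (q * x) * q - q * Real.cosh x) x := by
    intro x
    have h1 : HasDerivAt (fun x : ℝ => Real.sinh (q * x)) (Real.cosh (q * x) * q) x := by
      have := (Real.hasDerivAt_sinh (q * x)).comp x
        (by simpa using (hasDerivAt_id x).const_mul q)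
      exact this
    have h2 : HasDerivAt (fun x : ℝ => q * Real.sinh x) (q * Real.cosh x) x :=
      (Real.hasDerivAt_sinh x).const_mul q
    exact h1.sub h2
  have hmono : StrictMonoOn g (Ici (0:ℝ)) := by
    apply strictMonoOn_of_deriv_pos (convex_Ici 0)
    · exact (fun x _ => ((hd x).differentiableAt.continuousAt.continuousWithinAt))
    · intro x hx
      rw [interior_Ici, mem_Ioi] at hx
      rw [(hd x).deriv]
      have hc : Real.cosh x < Real.cosh (q * x) := by
        rw [Real.cosh_lt_cosh]
        rw [abs_of_pos hx, abs_of_pos (by nlinarith)]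
        nlinarith
      nlinarith [hc, hq]
  have := hmono (le_refl (0:ℝ)) (le_of_lt hu) hu
  simp only [hg, mul_zero, Real.sinh_zero, sub_zero, mul_zero] at this
  linarith [this]

lemma sinh_sq_lt (q : ℝ) (hq : 1 < q) {u : ℝ} (hu : u ≠ 0) :
    q ^ 2 * Real.sinh u ^ 2 < Real.sinh (q * u) ^ 2 := by
  have hq0 : (0:ℝ) < q := by linarith
  rcases lt_or_gt_of_ne hu with h | h
  · have h' : 0 < -u := by linarith
    have h1 : q * Real.sinh (-u) < Real.sinh (q * -u) := sinh_mul_gt q hq h'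
    have hs : 0 < Real.sinh (-u) := Real.sinh_pos_iff.2 h'
    rw [show q * -u = -(q*u) by ring, Real.sinh_neg, Real.sinh_neg] at h1
    rw [Real.sinh_neg] at hs
    calc q ^ 2 * Real.sinh u ^ 2 = (q * -Real.sinh u) ^ 2 := by ring
      _ < (-Real.sinh (q*u)) ^ 2 :=
          pow_lt_pow_left₀ h1 (by positivity) (by norm_num)
      _ = Real.sinh (q*u) ^ 2 := by ring
  · have h1 := sinh_mul_gt q hq h
    have hs : 0 < Real.sinh u := Real.sinh_pos_iff.2 h
    calc q ^ 2 * Real.sinh u ^ 2 = (q * Real.sinh u) ^ 2 := by ring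
      _ < Real.sinh (q*u) ^ 2 := pow_lt_pow_left₀ h1 (by positivity) (by norm_num)

lemma exp_identity (q u : ℝ) :
    (Real.exp (2*u*q) - 1)^2 - q^2 * Real.exp (2*u*(q-1)) * (Real.exp (2*u) - 1)^2
      = 4 * Real.exp (q*u)^2 * (Real.sinh (q*u)^2 - q^2 * Real.sinh u ^2) := by
  have h1 : Real.exp (2*u*q) = Real.exp (q*u) ^ 2 := by
    rw [sq, ← Real.exp_add]; ring_nf
  have h2 : Real.exp (2*u) = Real.exp u ^ 2 := by
    rw [sq, ← Real.exp_add]; ring_nf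
  have h3 : Real.exp (2*u*(q-1)) = Real.exp (q*u) ^ 2 / Real.exp u ^ 2 := by
    rw [eq_div_iff (by positivity), sq, sq, ← Real.exp_add, ← Real.exp_add, ← Real.exp_add]
    ring_nf
  have hs1 : Real.sinh (q*u) = (Real.exp (q*u) - (Real.exp (q*u))⁻¹) / 2 := by
    rw [Real.sinh_eq, Real.exp_neg]
  have hs2 : Real.sinh u = (Real.exp u - (Real.exp u)⁻¹) / 2 := by
    rw [Real.sinh_eq, Real.exp_neg]
  rw [h1, h2, h3, hs1, hs2]
  have e1 := Real.exp_ne_zero (q*u)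
  have e2 := Real.exp_ne_zero u
  field_simp
  ring

lemma key_expr_nonneg (q : ℝ) (hq : 1 < q) {t : ℝ} (ht : 0 < t) (ht1 : t ≠ 1) :
    0 < (t ^ q - 1) ^ 2 - q ^ 2 * t ^ (q - 1) * (t - 1) ^ 2 := by
  set u : ℝ := Real.log t / 2 with hu
  have hlog : Real.log t = 2 * u := by rw [hu]; ring
  have hte : t = Real.exp (2 * u) := by rw [← hlog, Real.exp_log ht]
  have htq : t ^ q = Real.exp (2 * u * q) := by
    rw [Real.rpow_def_of_pos ht, hlog]
  have htq1 : t ^ (q - 1) = Real.exp (2 * u * (q - 1)) := by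
    rw [Real.rpow_def_of_pos ht, hlog]
  have hune : u ≠ 0 := by
    intro h
    apply ht1
    have : Real.log t = 0 := by rw [hlog, h]; ring
    rcases Real.log_eq_zero.1 this with h' | h' | h' <;> linarith
  have := sinh_sq_lt q hq hune
  calc (0:ℝ) < 4 * Real.exp (q*u)^2 * (Real.sinh (q*u)^2 - q^2 * Real.sinh u ^2) := by
        have h4 : 0 < Real.exp (q*u)^2 := by positivity
        nlinarith [mul_pos h4 (sub_pos.2 this)]
    _ = (t ^ q - 1) ^ 2 - q ^ 2 * t ^ (q - 1) * (t - 1) ^ 2 := by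
        rw [htq, htq1]
        rw [hte]
        exact (exp_identity q u).symm

lemma P_eq_of_pos (q s : ℝ) (h : 0 < 1 + s) :
    P q s = ((1+s) ^ q - 1) ^ 2 - q ^ 2 * (1+s) ^ (q - 1) * ((1+s) - 1) ^ 2 := by
  set t : ℝ := 1 + s with hts
  have e1 : t ^ (q-2) * t = t ^ (q-1) := by
    have h2 := Real.rpow_add h (q-2) 1
    rw [Real.rpow_one] at h2
    rw [← h2, show q-2+1 = q-1 by ring]
  have e2 : t ^ (q-1) * t = t ^ q := by
    have h2 := Real.rpow_add h (q-1) 1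
    rw [Real.rpow_one] at h2
    rw [← h2, show q-1+1 = q by ring]
  have e3 : t ^ q * t ^ q = t ^ (2*q) := by
    rw [← Real.rpow_add h, show q+q = 2*q by ring]
  unfold P
  rw [← hts, abs_of_pos h]
  linear_combination -e3 - q^2*(2-t)*e2 - q^2*e1

lemma P_main (q : ℝ) (hq : 1 < q) (s : ℝ) :
    (s = 0 → P q s = 0) ∧ (s ≠ 0 → 0 < P q s) := by
  rcases lt_trichotomy (1 + s) 0 with h | h | h
  · constructor
    · intro h0; rw [h0] at h; norm_num at h
    · intro _
      have ha : 0 < |1 + s| := abs_pos.2 (by linarith)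
      have A1 := Real.rpow_pos_of_pos ha (2*q)
      have A2 := Real.rpow_pos_of_pos ha q
      have A3 := Real.rpow_pos_of_pos ha (q-2)
      unfold P
      have hq2 : (0:ℝ) < q ^ 2 := by positivity
      have hq3 : (0:ℝ) < q ^ 2 - 1 := by nlinarith
      nlinarith [A1, mul_pos (mul_pos hq2 A2) (neg_pos.2 h),
        mul_pos (mul_pos hq2 A3) (neg_pos.2 h), mul_pos hq3 A2]
  · constructor
    · intro h0; rw [h0] at h; norm_num at h
    · intro _
      unfold P
      rw [h, abs_zero, Real.zero_rpow (by positivity), Real.zero_rpow (by positivity)]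
      ring_nf
      norm_num
  · constructor
    · intro h0
      subst h0
      unfold P
      norm_num
      ring
    · intro hs
      rw [P_eq_of_pos q s h]
      have ht1 : (1:ℝ) + s ≠ 1 := by intro hh; apply hs; linarith
      exact key_expr_nonneg q hq h ht1

theorem P_nonneg_and_zero_iff (q : ℝ) (hq : 1 < q) :
    (∀ s : ℝ, 0 ≤ P q s) ∧ (∀ s : ℝ, P q s = 0 ↔ s = 0) := by
  constructor
  · intro s
    rcases eq_or_ne s 0 with h | h
    · exact le_of_eq ((P_main q hq s).1 h).symm
    · exact le_of_lt ((P_main q hq s).2 h)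
  · intro s
    constructor
    · intro hP
      by_contra h
      exact absurd hP (ne_of_gt ((P_main q hq s).2 h))
    · exact (P_main q hq s).1
end

section
/- Let q > 1 and P(s) = |1+s|^{2q} - q²|1+s|^q(1+s) + 2(q²-1)|1+s|^q - q²|1+s|^{q-2}(1+s) + 1. Then the limit as s → 0 (s ≠ 0) of 1 + s·P'(s)/P(s) equals 5. -/
open Filter Real

lemma hasDerivAt_term (e : ℝ) {s : ℝ} (hs : (1:ℝ) + s ≠ 0) :
    HasDerivAt (fun s : ℝ => (1 + s) ^ e) (e * (1 + s) ^ (e - 1)) s := by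
  have h := (Real.hasDerivAt_rpow_const (x := 1 + s) (p := e) (Or.inl hs)).comp s
    ((hasDerivAt_id s).const_add 1)
  simpa [Function.comp_def] using h

lemma tendsto_term (e : ℝ) : Filter.Tendsto (fun s : ℝ => (1+s)^e) (nhds 0) (nhds 1) := by
  have h : ContinuousAt (fun s : ℝ => (1+s)^e) 0 :=
    (continuousAt_const.add continuousAt_id).rpow_const (Or.inl (by norm_num))
  simpa [Real.one_rpow] using h.tendsto

lemma lh_step (f f' g g' : ℝ → ℝ) (L : ℝ)
    (hf : ∀ᶠ s in nhdsWithin (0:ℝ) {0}ᶜ, HasDerivAt f (f' s) s)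
    (hg : ∀ s, HasDerivAt g (g' s) s)
    (hgne : ∀ s : ℝ, s ≠ 0 → g' s ≠ 0)
    (hf0 : Filter.Tendsto f (nhdsWithin (0:ℝ) {0}ᶜ) (nhds 0))
    (hg0 : Filter.Tendsto g (nhds (0:ℝ)) (nhds 0))
    (hdiv : Filter.Tendsto (fun s => f' s / g' s) (nhdsWithin (0:ℝ) {0}ᶜ) (nhds L)) :
    Filter.Tendsto (fun s => f s / g s) (nhdsWithin (0:ℝ) {0}ᶜ) (nhds L) :=
  HasDerivAt.lhopital_zero_nhdsNE hf (Filter.Eventually.of_forall fun s => hg s)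
    (eventually_mem_nhdsWithin.mono fun s hs => hgne s hs)
    hf0 (hg0.mono_left nhdsWithin_le_nhds) hdiv

noncomputable def f0 (q s : ℝ) : ℝ :=
  (1+s)^(2*q) - q^2*(1+s)^(q+1) + 2*(q^2-1)*(1+s)^q - q^2*(1+s)^(q-1) + 1

noncomputable def f1 (q s : ℝ) : ℝ :=
  2*q*(1+s)^(2*q-1) - q^2*(q+1)*(1+s)^q + 2*(q^2-1)*q*(1+s)^(q-1) - q^2*(q-1)*(1+s)^(q-2)

noncomputable def f2 (q s : ℝ) : ℝ :=
  2*q*(2*q-1)*(1+s)^(2*q-2) - q^2*(q+1)*q*(1+s)^(q-1) + 2*(q^2-1)*q*(q-1)*(1+s)^(q-2)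
    - q^2*(q-1)*(q-2)*(1+s)^(q-3)

noncomputable def f3 (q s : ℝ) : ℝ :=
  2*q*(2*q-1)*(2*q-2)*(1+s)^(2*q-3) - q^2*(q+1)*q*(q-1)*(1+s)^(q-2)
    + 2*(q^2-1)*q*(q-1)*(q-2)*(1+s)^(q-3) - q^2*(q-1)*(q-2)*(q-3)*(1+s)^(q-4)

noncomputable def f4 (q s : ℝ) : ℝ :=
  2*q*(2*q-1)*(2*q-2)*(2*q-3)*(1+s)^(2*q-4) - q^2*(q+1)*q*(q-1)*(q-2)*(1+s)^(q-3)
    + 2*(q^2-1)*q*(q-1)*(q-2)*(q-3)*(1+s)^(q-4) - q^2*(q-1)*(q-2)*(q-3)*(q-4)*(1+s)^(q-5)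

lemma hasDerivAt_f0 (q : ℝ) {s : ℝ} (hs : (1:ℝ) + s ≠ 0) :
    HasDerivAt (f0 q) (f1 q s) s := by
  have H := ((((hasDerivAt_term (2*q) hs).sub
    ((hasDerivAt_term (q+1) hs).const_mul (q^2))).add
    ((hasDerivAt_term q hs).const_mul (2*(q^2-1)))).sub
    ((hasDerivAt_term (q-1) hs).const_mul (q^2))).add_const 1
  have heq : 2*q*(1+s)^(2*q-1) - q^2*((q+1)*(1+s)^(q+1-1)) + 2*(q^2-1)*(q*(1+s)^(q-1))
      - q^2*((q-1)*(1+s)^(q-1-1)) = f1 q s := by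
    rw [show q+1-1 = q by ring, show q-1-1 = q-2 by ring]; unfold f1; ring
  rw [← heq]
  exact H

lemma hasDerivAt_f1 (q : ℝ) {s : ℝ} (hs : (1:ℝ) + s ≠ 0) :
    HasDerivAt (f1 q) (f2 q s) s := by
  have H := ((((hasDerivAt_term (2*q-1) hs).const_mul (2*q)).sub
    ((hasDerivAt_term q hs).const_mul (q^2*(q+1)))).add
    ((hasDerivAt_term (q-1) hs).const_mul (2*(q^2-1)*q))).sub
    ((hasDerivAt_term (q-2) hs).const_mul (q^2*(q-1)))
  have heq : 2*q*((2*q-1)*(1+s)^(2*q-1-1)) - q^2*(q+1)*(q*(1+s)^(q-1))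
      + 2*(q^2-1)*q*((q-1)*(1+s)^(q-1-1)) - q^2*(q-1)*((q-2)*(1+s)^(q-2-1)) = f2 q s := by
    rw [show 2*q-1-1 = 2*q-2 by ring, show q-1-1 = q-2 by ring, show q-2-1 = q-3 by ring]
    unfold f2; ring
  rw [← heq]
  exact H

lemma hasDerivAt_f2 (q : ℝ) {s : ℝ} (hs : (1:ℝ) + s ≠ 0) :
    HasDerivAt (f2 q) (f3 q s) s := by
  have H := ((((hasDerivAt_term (2*q-2) hs).const_mul (2*q*(2*q-1))).sub
    ((hasDerivAt_term (q-1) hs).const_mul (q^2*(q+1)*q))).add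
    ((hasDerivAt_term (q-2) hs).const_mul (2*(q^2-1)*q*(q-1)))).sub
    ((hasDerivAt_term (q-3) hs).const_mul (q^2*(q-1)*(q-2)))
  have heq : 2*q*(2*q-1)*((2*q-2)*(1+s)^(2*q-2-1)) - q^2*(q+1)*q*((q-1)*(1+s)^(q-1-1))
      + 2*(q^2-1)*q*(q-1)*((q-2)*(1+s)^(q-2-1))
      - q^2*(q-1)*(q-2)*((q-3)*(1+s)^(q-3-1)) = f3 q s := by
    rw [show 2*q-2-1 = 2*q-3 by ring, show q-1-1 = q-2 by ring, show q-2-1 = q-3 by ring,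
      show q-3-1 = q-4 by ring]
    unfold f3; ring
  rw [← heq]
  exact H

lemma hasDerivAt_f3 (q : ℝ) {s : ℝ} (hs : (1:ℝ) + s ≠ 0) :
    HasDerivAt (f3 q) (f4 q s) s := by
  have H := ((((hasDerivAt_term (2*q-3) hs).const_mul (2*q*(2*q-1)*(2*q-2))).sub
    ((hasDerivAt_term (q-2) hs).const_mul (q^2*(q+1)*q*(q-1)))).add
    ((hasDerivAt_term (q-3) hs).const_mul (2*(q^2-1)*q*(q-1)*(q-2)))).sub
    ((hasDerivAt_term (q-4) hs).const_mul (q^2*(q-1)*(q-2)*(q-3)))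
  have heq : 2*q*(2*q-1)*(2*q-2)*((2*q-3)*(1+s)^(2*q-3-1)) - q^2*(q+1)*q*(q-1)*((q-2)*(1+s)^(q-2-1))
      + 2*(q^2-1)*q*(q-1)*(q-2)*((q-3)*(1+s)^(q-3-1))
      - q^2*(q-1)*(q-2)*(q-3)*((q-4)*(1+s)^(q-4-1)) = f4 q s := by
    rw [show 2*q-3-1 = 2*q-4 by ring, show q-2-1 = q-3 by ring, show q-3-1 = q-4 by ring,
      show q-4-1 = q-5 by ring]
    unfold f4; ring
  rw [← heq]
  exact H

lemma tendsto_f0 (q : ℝ) : Filter.Tendsto (f0 q) (nhds 0) (nhds 0) := by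
  have H := ((((tendsto_term (2*q)).sub ((tendsto_term (q+1)).const_mul (q^2))).add
    ((tendsto_term q).const_mul (2*(q^2-1)))).sub
    ((tendsto_term (q-1)).const_mul (q^2))).add_const 1
  have : (1 - q^2*1 + 2*(q^2-1)*1 - q^2*1 + 1 : ℝ) = 0 := by ring
  rw [this] at H
  exact H

lemma tendsto_f1 (q : ℝ) : Filter.Tendsto (f1 q) (nhds 0) (nhds 0) := by
  have H := ((((tendsto_term (2*q-1)).const_mul (2*q)).sub
    ((tendsto_term q).const_mul (q^2*(q+1)))).add
    ((tendsto_term (q-1)).const_mul (2*(q^2-1)*q))).sub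
    ((tendsto_term (q-2)).const_mul (q^2*(q-1)))
  have : (2*q*1 - q^2*(q+1)*1 + 2*(q^2-1)*q*1 - q^2*(q-1)*1 : ℝ) = 0 := by ring
  rw [this] at H
  exact H

lemma tendsto_f2 (q : ℝ) : Filter.Tendsto (f2 q) (nhds 0) (nhds 0) := by
  have H := ((((tendsto_term (2*q-2)).const_mul (2*q*(2*q-1))).sub
    ((tendsto_term (q-1)).const_mul (q^2*(q+1)*q))).add
    ((tendsto_term (q-2)).const_mul (2*(q^2-1)*q*(q-1)))).sub
    ((tendsto_term (q-3)).const_mul (q^2*(q-1)*(q-2)))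
  have : (2*q*(2*q-1)*1 - q^2*(q+1)*q*1 + 2*(q^2-1)*q*(q-1)*1 - q^2*(q-1)*(q-2)*1 : ℝ) = 0 := by
    ring
  rw [this] at H
  exact H

lemma tendsto_f3 (q : ℝ) : Filter.Tendsto (f3 q) (nhds 0) (nhds 0) := by
  have H := ((((tendsto_term (2*q-3)).const_mul (2*q*(2*q-1)*(2*q-2))).sub
    ((tendsto_term (q-2)).const_mul (q^2*(q+1)*q*(q-1)))).add
    ((tendsto_term (q-3)).const_mul (2*(q^2-1)*q*(q-1)*(q-2)))).sub
    ((tendsto_term (q-4)).const_mul (q^2*(q-1)*(q-2)*(q-3)))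
  have : (2*q*(2*q-1)*(2*q-2)*1 - q^2*(q+1)*q*(q-1)*1 + 2*(q^2-1)*q*(q-1)*(q-2)*1
      - q^2*(q-1)*(q-2)*(q-3)*1 : ℝ) = 0 := by ring
  rw [this] at H
  exact H

lemma tendsto_f4 (q : ℝ) : Filter.Tendsto (f4 q) (nhds 0) (nhds (2*q^4 - 2*q^2)) := by
  have H := ((((tendsto_term (2*q-4)).const_mul (2*q*(2*q-1)*(2*q-2)*(2*q-3))).sub
    ((tendsto_term (q-3)).const_mul (q^2*(q+1)*q*(q-1)*(q-2)))).add
    ((tendsto_term (q-4)).const_mul (2*(q^2-1)*q*(q-1)*(q-2)*(q-3)))).sub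
    ((tendsto_term (q-5)).const_mul (q^2*(q-1)*(q-2)*(q-3)*(q-4)))
  have : (2*q*(2*q-1)*(2*q-2)*(2*q-3)*1 - q^2*(q+1)*q*(q-1)*(q-2)*1
      + 2*(q^2-1)*q*(q-1)*(q-2)*(q-3)*1 - q^2*(q-1)*(q-2)*(q-3)*(q-4)*1 : ℝ)
      = 2*q^4 - 2*q^2 := by ring
  rw [this] at H
  exact H

lemma hev_ne (  _h : True := trivial) : ∀ᶠ s in nhdsWithin (0:ℝ) {0}ᶜ, (1:ℝ) + s ≠ 0 :=
  (((eventually_gt_nhds (by norm_num : (-1:ℝ) < 0)).mono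
    (fun s hs h => by linarith)).filter_mono nhdsWithin_le_nhds)

lemma chainX (q : ℝ) :
    Filter.Tendsto (fun s : ℝ => f0 q s / s^4) (nhdsWithin (0:ℝ) {0}ᶜ)
      (nhds ((2*q^4 - 2*q^2)/24)) := by
  have hev := hev_ne
  have T4 : Filter.Tendsto (fun s : ℝ => f4 q s / 24) (nhdsWithin (0:ℝ) {0}ᶜ)
      (nhds ((2*q^4 - 2*q^2)/24)) :=
    ((tendsto_f4 q).div_const 24).mono_left nhdsWithin_le_nhds
  have T3 := lh_step (f3 q) (f4 q) (fun s => 24*s) (fun _ => 24) _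
    (hev.mono fun s hs => hasDerivAt_f3 q hs)
    (fun s => by simpa using (hasDerivAt_id s).const_mul (24:ℝ))
    (fun s _ => by norm_num)
    ((tendsto_f3 q).mono_left nhdsWithin_le_nhds)
    (by have h : Continuous (fun s : ℝ => 24*s) := by continuity
        have := h.tendsto 0; norm_num at this; exact this)
    T4
  have T2 := lh_step (f2 q) (f3 q) (fun s => 12*s^2) (fun s => 24*s) _
    (hev.mono fun s hs => hasDerivAt_f2 q hs)
    (fun s => by
      have := (hasDerivAt_pow 2 s).const_mul (12:ℝ)
      exact this.congr_deriv (by norm_num; ring))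
    (fun s hs => by simp [hs])
    ((tendsto_f2 q).mono_left nhdsWithin_le_nhds)
    (by have h : Continuous (fun s : ℝ => 12*s^2) := by continuity
        have := h.tendsto 0; norm_num at this; exact this)
    T3
  have T1 := lh_step (f1 q) (f2 q) (fun s => 4*s^3) (fun s => 12*s^2) _
    (hev.mono fun s hs => hasDerivAt_f1 q hs)
    (fun s => by
      have := (hasDerivAt_pow 3 s).const_mul (4:ℝ)
      exact this.congr_deriv (by norm_num; ring))
    (fun s hs => by simp [hs, pow_ne_zero])
    ((tendsto_f1 q).mono_left nhdsWithin_le_nhds)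
    (by have h : Continuous (fun s : ℝ => 4*s^3) := by continuity
        have := h.tendsto 0; norm_num at this; exact this)
    T2
  exact lh_step (f0 q) (f1 q) (fun s => s^4) (fun s => 4*s^3) _
    (hev.mono fun s hs => hasDerivAt_f0 q hs)
    (fun s => by simpa using hasDerivAt_pow 4 s)
    (fun s hs => by simp [hs, pow_ne_zero])
    ((tendsto_f0 q).mono_left nhdsWithin_le_nhds)
    (by have h : Continuous (fun s : ℝ => s^4) := by continuity
        have := h.tendsto 0; norm_num at this; exact this)
    T1

lemma chainY (q : ℝ) :
    Filter.Tendsto (fun s : ℝ => f1 q s / s^3) (nhdsWithin (0:ℝ) {0}ᶜ)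
      (nhds ((2*q^4 - 2*q^2)/6)) := by
  have hev := hev_ne
  have S3 : Filter.Tendsto (fun s : ℝ => f4 q s / 6) (nhdsWithin (0:ℝ) {0}ᶜ)
      (nhds ((2*q^4 - 2*q^2)/6)) :=
    ((tendsto_f4 q).div_const 6).mono_left nhdsWithin_le_nhds
  have S2 := lh_step (f3 q) (f4 q) (fun s => 6*s) (fun _ => 6) _
    (hev.mono fun s hs => hasDerivAt_f3 q hs)
    (fun s => by simpa using (hasDerivAt_id s).const_mul (6:ℝ))
    (fun s _ => by norm_num)
    ((tendsto_f3 q).mono_left nhdsWithin_le_nhds)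
    (by have h : Continuous (fun s : ℝ => 6*s) := by continuity
        have := h.tendsto 0; norm_num at this; exact this)
    S3
  have S1 := lh_step (f2 q) (f3 q) (fun s => 3*s^2) (fun s => 6*s) _
    (hev.mono fun s hs => hasDerivAt_f2 q hs)
    (fun s => by
      have := (hasDerivAt_pow 2 s).const_mul (3:ℝ)
      exact this.congr_deriv (by norm_num; ring))
    (fun s hs => by simp [hs])
    ((tendsto_f2 q).mono_left nhdsWithin_le_nhds)
    (by have h : Continuous (fun s : ℝ => 3*s^2) := by continuity
        have := h.tendsto 0; norm_num at this; exact this)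
    S2
  exact lh_step (f1 q) (f2 q) (fun s => s^3) (fun s => 3*s^2) _
    (hev.mono fun s hs => hasDerivAt_f1 q hs)
    (fun s => by simpa using hasDerivAt_pow 3 s)
    (fun s hs => by simp [hs, pow_ne_zero])
    ((tendsto_f1 q).mono_left nhdsWithin_le_nhds)
    (by have h : Continuous (fun s : ℝ => s^3) := by continuity
        have := h.tendsto 0; norm_num at this; exact this)
    S1

lemma P_eq_f0 (q : ℝ) {t : ℝ} (ht : -1 < t) : P q t = f0 q t := by
  have h1 : (0:ℝ) < 1 + t := by linarith
  unfold P f0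
  rw [abs_of_pos h1, show q - 1 = q - 2 + 1 by ring, Real.rpow_add_one h1.ne' (q-2),
    Real.rpow_add_one h1.ne' q]
  ring

theorem limit_at_zero_eq_five (q : ℝ) (hq : 1 < q) :
    Filter.Tendsto (fun s : ℝ => 1 + s * deriv (P q) s / P q s)
      (nhdsWithin 0 {0}ᶜ) (nhds 5) := by
  have htpos : (0:ℝ) < 2*q^4 - 2*q^2 := by nlinarith [sq_nonneg q, mul_pos (mul_pos (by positivity : (0:ℝ) < 2*q^2) (by nlinarith : (0:ℝ) < q - 1)) (by nlinarith : (0:ℝ) < q + 1)]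
  have ht : (2*q^4 - 2*q^2 : ℝ) ≠ 0 := ne_of_gt htpos
  have hA : ((2*q^4 - 2*q^2)/24 : ℝ) ≠ 0 := by positivity
  have hdiv := (chainY q).div (chainX q) hA
  have hval : ((2*q^4 - 2*q^2)/6 : ℝ) / ((2*q^4 - 2*q^2)/24) = 4 := by
    rw [div_div_div_cancel_left' _ _ ht]; norm_num
  rw [hval] at hdiv
  have hfin := (tendsto_const_nhds (x := (1:ℝ)) (f := nhdsWithin (0:ℝ) {0}ᶜ)).add hdiv
  norm_num at hfin
  refine hfin.congr' ?_
  have hev1 : ∀ᶠ s in nhdsWithin (0:ℝ) {0}ᶜ, -1 < s :=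
    (eventually_gt_nhds (by norm_num : (-1:ℝ) < 0)).filter_mono nhdsWithin_le_nhds
  filter_upwards [hev1, eventually_mem_nhdsWithin] with s hs1 hs0
  have hs0' : s ≠ 0 := hs0
  have h1s : (1:ℝ) + s ≠ 0 := by intro h; linarith
  have hPd : deriv (P q) s = f1 q s := by
    have hEq : P q =ᶠ[nhds s] f0 q := by
      filter_upwards [Ioi_mem_nhds hs1] with t ht
      exact P_eq_f0 q ht
    rw [hEq.deriv_eq, (hasDerivAt_f0 q h1s).deriv]
  rw [hPd, P_eq_f0 q hs1]
  rcases eq_or_ne (f0 q s) 0 with h | h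
  · simp [h]
  · have hs3 : s^3 ≠ 0 := pow_ne_zero _ hs0'
    have hs4 : s^4 ≠ 0 := pow_ne_zero _ hs0'
    field_simp
end

section
/- Let p, q > 1 with 1/p + 1/q = 1, and suppose c, s : ℝ → ℝ are differentiable with s' = |c|^{q-1}·sgn(c) and c' = -|s|^{q-1}·sgn(s). Then u = s satisfies the (one-dimensional) q-Laplace equation: the function |u'|^{p-2}·u' is differentiable and (|u'|^{p-2}·u')' = -|u|^{q-2}·u. -/
lemma sign_mul_abs' (r : ℝ) : Real.sign r * |r| = r := by
  rcases lt_trichotomy r 0 with h | h | h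
  · rw [Real.sign_of_neg h, abs_of_neg h]; ring
  · simp [h]
  · rw [Real.sign_of_pos h, abs_of_pos h]; ring

theorem q_laplace_equation (p q : ℝ) (hp : 1 < p) (hq : 1 < q)
    (hpq : 1 / p + 1 / q = 1) (c s : ℝ → ℝ)
    (hs : ∀ w : ℝ, HasDerivAt s (|c w| ^ (q - 1) * Real.sign (c w)) w)
    (hc : ∀ w : ℝ, HasDerivAt c (-(|s w| ^ (q - 1) * Real.sign (s w))) w) :
    ∀ w : ℝ,
      HasDerivAt (fun w => |deriv s w| ^ (p - 2) * deriv s w)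
        (-(|s w| ^ (q - 2) * s w)) w := by
  have hp0 : p ≠ 0 := by linarith
  have hq0 : q ≠ 0 := by linarith
  have hpq' : q + p = p * q := by field_simp at hpq; linarith
  have h1 : (q - 1) * (p - 1) = 1 := by nlinarith
  have key : ∀ w, |deriv s w| ^ (p - 2) * deriv s w = c w := by
    intro w
    have hd : deriv s w = |c w| ^ (q - 1) * Real.sign (c w) := (hs w).deriv
    rcases eq_or_ne (c w) 0 with h0 | h0
    · rw [hd, h0]
      simp [Real.sign_zero]
    · have habs : (0 : ℝ) < |c w| := abs_pos.mpr h0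
      have hsgn : |Real.sign (c w)| = 1 := by
        rcases lt_or_gt_of_ne h0 with h | h
        · rw [Real.sign_of_neg h]; norm_num
        · rw [Real.sign_of_pos h]; norm_num
      have habsd : |deriv s w| = |c w| ^ (q - 1) := by
        rw [hd, abs_mul, hsgn, mul_one,
          abs_of_nonneg (Real.rpow_nonneg (abs_nonneg _) _)]
      rw [habsd, hd, ← Real.rpow_mul (abs_nonneg _), ← mul_assoc,
        ← Real.rpow_add habs]
      have h2 : (q - 1) * (p - 2) + (q - 1) = 1 := by nlinarith
      rw [h2, Real.rpow_one, mul_comm, sign_mul_abs']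
  intro w
  have hfun : (fun w => |deriv s w| ^ (p - 2) * deriv s w) = c := funext key
  rw [hfun]
  have hval : -(|s w| ^ (q - 2) * s w) = -(|s w| ^ (q - 1) * Real.sign (s w)) := by
    rcases eq_or_ne (s w) 0 with h0 | h0
    · simp [h0, Real.sign_zero]
    · have habs : (0 : ℝ) < |s w| := abs_pos.mpr h0
      congr 1
      calc |s w| ^ (q - 2) * s w = |s w| ^ (q - 2) * (|s w| ^ (1:ℝ) * Real.sign (s w)) := by
            rw [Real.rpow_one, mul_comm (|s w|), sign_mul_abs']
        _ = |s w| ^ (q - 1) * Real.sign (s w) := by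
            rw [← mul_assoc, ← Real.rpow_add habs]; ring_nf
  rw [hval]
  exact hc w
end

section
/- Let q > 1 and let cos_q, sin_q : ℝ → ℝ solve sin_q' = |cos_q|^{q-1}·sgn(cos_q), cos_q' = -|sin_q|^{q-1}·sgn(sin_q) with sin_q(0) = 0 and cos_q(0) = 1, and let J_R(θ, w) be the reduced Jacobian as in the ℓ^p-Heisenberg group. Then at every point where cos_q(w+θ)·sin_q(w+θ) ≠ 0 and cos_q(θ)·sin_q(θ) ≠ 0, the partial derivative ∂_w J_R(θ, w) equals (q-1)·|cos_q(w+θ)·sin_q(w+θ)|^{q-2} · [ sin_q(w+θ)cos_q(θ) - cos_q(w+θ)sin_q(θ) - w·( sin_q(w+θ)·|sin_q θ|^{q-1}sgn(sin_q θ) + cos_q(w+θ)·|cos_q θ|^{q-1}sgn(cos_q θ) ) ]. -/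
lemma hasDerivAt_abs_rpow_sign (q : ℝ) {x : ℝ} (hx : x ≠ 0) :
    HasDerivAt (fun y : ℝ => |y| ^ (q - 1) * Real.sign y) ((q - 1) * |x| ^ (q - 2)) x := by
  have hE : q - 1 - 1 = q - 2 := by ring
  rcases hx.lt_or_gt with h | h
  · have h1 : HasDerivAt (fun y : ℝ => y ^ (q - 1)) ((q - 1) * (-x) ^ (q - 1 - 1)) (-x) :=
      Real.hasDerivAt_rpow_const (Or.inl (by linarith))
    rw [hE] at h1
    have h2 : HasDerivAt (fun y : ℝ => (-y) ^ (q - 1))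
        (((q - 1) * (-x) ^ (q - 2)) * (-1)) x := h1.comp x (hasDerivAt_neg x)
    have h3 : HasDerivAt (fun y : ℝ => -((-y) ^ (q - 1))) ((q - 1) * (-x) ^ (q - 2)) x := by
      have := h2.neg
      exact this.congr_deriv (by ring)
    rw [abs_of_neg h]
    apply h3.congr_of_eventuallyEq
    filter_upwards [Iio_mem_nhds h] with y hy
    rw [abs_of_neg hy, Real.sign_of_neg hy]
    ring
  · have h1 : HasDerivAt (fun y : ℝ => y ^ (q - 1)) ((q - 1) * x ^ (q - 1 - 1)) x :=
      Real.hasDerivAt_rpow_const (Or.inl (ne_of_gt h))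
    rw [hE] at h1
    rw [abs_of_pos h]
    apply h1.congr_of_eventuallyEq
    filter_upwards [Ioi_mem_nhds h] with y hy
    rw [abs_of_pos hy, Real.sign_of_pos hy, mul_one]

lemma abs_rpow_sign_eq (q : ℝ) {x : ℝ} (hx : x ≠ 0) :
    |x| ^ (q - 1) * Real.sign x = |x| ^ (q - 2) * x := by
  have h1 : |x| ^ (q - 1) = |x| ^ (q - 2) * |x| := by
    rw [← Real.rpow_add_one (abs_ne_zero.mpr hx)]
    congr 1; ring
  have hs : Real.sign x * |x| = x := by
    rcases hx.lt_or_gt with h | h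
    · rw [Real.sign_of_neg h, abs_of_neg h]; ring
    · rw [Real.sign_of_pos h, abs_of_pos h]; ring
  rw [h1, mul_assoc, mul_comm (|x|) (Real.sign x), hs]

theorem reduced_jacobian_derivative_formula (q : ℝ) (hq : 1 < q)
    (C S : ℝ → ℝ)
    (hS : ∀ u : ℝ, HasDerivAt S (|C u| ^ (q - 1) * Real.sign (C u)) u)
    (hC : ∀ u : ℝ, HasDerivAt C (-(|S u| ^ (q - 1) * Real.sign (S u))) u)
    (hS0 : S 0 = 0) (hC0 : C 0 = 1)
    (JR : ℝ → ℝ → ℝ)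
    (hJR : ∀ θ w : ℝ, JR θ w =
      2 - (S (w + θ) * (|S θ| ^ (q - 1) * Real.sign (S θ))
            + C (w + θ) * (|C θ| ^ (q - 1) * Real.sign (C θ)))
        - ((|S (w + θ)| ^ (q - 1) * Real.sign (S (w + θ))) * S θ
            + (|C (w + θ)| ^ (q - 1) * Real.sign (C (w + θ))) * C θ)
        - w * ((|S (w + θ)| ^ (q - 1) * Real.sign (S (w + θ)))
                * (|C θ| ^ (q - 1) * Real.sign (C θ))
              - (|C (w + θ)| ^ (q - 1) * Real.sign (C (w + θ)))
                * (|S θ| ^ (q - 1) * Real.sign (S θ)))) :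
    ∀ θ w : ℝ, C (w + θ) * S (w + θ) ≠ 0 → C θ * S θ ≠ 0 →
      deriv (JR θ) w =
        (q - 1) * |C (w + θ) * S (w + θ)| ^ (q - 2) *
          (S (w + θ) * C θ - C (w + θ) * S θ
            - w * (S (w + θ) * (|S θ| ^ (q - 1) * Real.sign (S θ))
                  + C (w + θ) * (|C θ| ^ (q - 1) * Real.sign (C θ)))) := by
  intro θ w hWθ hθ
  have hCu : C (w + θ) ≠ 0 := fun h => hWθ (by rw [h]; ring)
  have hSu : S (w + θ) ≠ 0 := fun h => hWθ (by rw [h]; ring)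
  set u := w + θ with hu
  set A := S u with hA
  set B := C u with hB
  set a := S θ with ha
  set b := C θ with hb
  set ga := |a| ^ (q - 1) * Real.sign a with hga
  set gb := |b| ^ (q - 1) * Real.sign b with hgb
  set gA := |A| ^ (q - 1) * Real.sign A with hgA
  set gB := |B| ^ (q - 1) * Real.sign B with hgB
  -- derivative of inner translation
  have hL : HasDerivAt (fun x : ℝ => x + θ) 1 w := (hasDerivAt_id w).add_const θ
  have h1 : HasDerivAt (fun x : ℝ => S (x + θ)) gB w := by
    have := (hS u).comp w hL; rw [mul_one] at this; exact this
  have h2 : HasDerivAt (fun x : ℝ => C (x + θ)) (-gA) w := by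
    have := (hC u).comp w hL; rw [mul_one] at this; exact this
  have h3 : HasDerivAt (fun x : ℝ => |S (x + θ)| ^ (q - 1) * Real.sign (S (x + θ)))
      ((q - 1) * |A| ^ (q - 2) * gB) w := by
    exact (hasDerivAt_abs_rpow_sign q (show A ≠ 0 from hSu)).comp w h1
  have h4 : HasDerivAt (fun x : ℝ => |C (x + θ)| ^ (q - 1) * Real.sign (C (x + θ)))
      ((q - 1) * |B| ^ (q - 2) * (-gA)) w := by
    exact (hasDerivAt_abs_rpow_sign q (show B ≠ 0 from hCu)).comp w h2
  have H : HasDerivAt (JR θ)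
      (0 - (gB * ga + (-gA) * gb)
        - ((q - 1) * |A| ^ (q - 2) * gB * a + (q - 1) * |B| ^ (q - 2) * (-gA) * b)
        - (1 * (gA * gb - gB * ga)
            + w * ((q - 1) * |A| ^ (q - 2) * gB * gb
                    - (q - 1) * |B| ^ (q - 2) * (-gA) * ga))) w := by
    have hfun : JR θ = fun x : ℝ =>
        2 - (S (x + θ) * ga + C (x + θ) * gb)
          - ((|S (x + θ)| ^ (q - 1) * Real.sign (S (x + θ))) * a
              + (|C (x + θ)| ^ (q - 1) * Real.sign (C (x + θ))) * b)
          - x * ((|S (x + θ)| ^ (q - 1) * Real.sign (S (x + θ))) * gb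
                  - (|C (x + θ)| ^ (q - 1) * Real.sign (C (x + θ))) * ga) :=
      funext fun x => hJR θ x
    rw [hfun]
    exact (((hasDerivAt_const w (2 : ℝ)).sub ((h1.mul_const ga).add (h2.mul_const gb))).sub
        ((h3.mul_const a).add (h4.mul_const b))).sub
        ((hasDerivAt_id w).mul ((h3.mul_const gb).sub (h4.mul_const ga)))
  rw [H.deriv]
  -- algebraic identities
  have kA : gA = |A| ^ (q - 2) * A := abs_rpow_sign_eq q hSu
  have kB : gB = |B| ^ (q - 2) * B := abs_rpow_sign_eq q hCu
  have kmul : |B * A| ^ (q - 2) = |B| ^ (q - 2) * |A| ^ (q - 2) := by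
    rw [abs_mul, Real.mul_rpow (abs_nonneg _) (abs_nonneg _)]
  rw [kmul, kA, kB]
  ring
end
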